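/- arXiv:1909.12499 — 2 statements merged into one kernel-verified Lean document; each statement's English description precedes it below -/
import Mathlib

section
/- Let (Ω, F, μ) be a probability space and X : Ω → ℝ a bounded measurable function. Then CVaR_α(X) converges to the essential supremum of X as α tends to 0 from above: lim_{α→0⁺} inf_{z∈ℝ} { z + (1/α) ∫ max(X(ω) − z, 0) dμ(ω) } = essSup_μ X. -/
open MeasureTheory Filter Set Topology

/-- The conditional value-at-risk at confidence level `α` of a random variable `X`
on a probability space `(Ω, μ)`:
`CVaRμ μ α X = ⨅ z, z + (1/α) * ∫ ω, max (X ω - z) 0 ∂μ`. -/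
noncomputable def CVaRm {Ω : Type*} [MeasurableSpace Ω] (μ : Measure Ω) (α : ℝ)
    (X : Ω → ℝ) : ℝ :=
  ⨅ z : ℝ, z + (1 / α) * ∫ ω, max (X ω - z) 0 ∂μ

/-!
Markov's inequality gives `∫ (X - z)⁺ ≥ (t - z) μ {t ≤ X}`, so once `α ≤ μ {t ≤ X}` every value
`z + α⁻¹ ∫ (X - z)⁺` of the objective is at least `t`, i.e. `t ≤ CVaR_α X`. For `t < essSup X`
this mass is positive, which gives the lower bound as `α → 0⁺`; conversely `z = essSup X` makes
the integral vanish, so `CVaR_α X ≤ essSup X`.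
-/

section CVaR

variable {Ω : Type*} [MeasurableSpace Ω] {μ : Measure Ω} {X : Ω → ℝ} {α t z c : ℝ}

lemma measureReal_le_pos_of_lt_essSup [IsFiniteMeasure μ]
    (hX : IsCoboundedUnder (· ≤ ·) (ae μ) X) (ht : t < essSup X μ) :
    0 < μ.real {ω | t ≤ X ω} := by
  refine ENNReal.toReal_pos (fun h0 => ?_) (measure_ne_top μ _)
  have hlt : ∀ᵐ ω ∂μ, X ω < t := by
    simpa only [ae_iff, not_lt] using h0
  exact (essSup_le_of_ae_le t (hlt.mono fun _ h => h.le) hX).not_gt ht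

lemma mul_measureReal_le_integral_max_sub (hint : Integrable (fun ω => max (X ω - z) 0) μ)
    (t : ℝ) : (t - z) * μ.real {ω | t ≤ X ω} ≤ ∫ ω, max (X ω - z) 0 ∂μ := by
  rcases le_or_gt t z with htz | hzt
  · exact (mul_nonpos_of_nonpos_of_nonneg (sub_nonpos.2 htz) measureReal_nonneg).trans
      (integral_nonneg fun _ => le_max_right _ _)
  · have hset : {ω | t - z ≤ max (X ω - z) 0} = {ω | t ≤ X ω} := by
      ext ω
      simp only [mem_ofPred_eq, le_max_iff, sub_le_sub_iff_right, not_le.2 (sub_pos.2 hzt),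
        or_false]
    simpa only [hset] using mul_meas_ge_le_integral_of_nonneg
      (f := fun ω => max (X ω - z) 0) (ae_of_all _ fun _ => le_max_right _ _) hint (t - z)

lemma le_add_inv_mul_integral_max_sub (hα : 0 < α) (hαt : α ≤ μ.real {ω | t ≤ X ω})
    (hint : Integrable (fun ω => max (X ω - z) 0) μ) :
    t ≤ z + 1 / α * ∫ ω, max (X ω - z) 0 ∂μ := by
  rcases le_or_gt t z with htz | hzt
  · have : 0 ≤ 1 / α * ∫ ω, max (X ω - z) 0 ∂μ := by positivity
    linarith
  · have hratio : 1 ≤ μ.real {ω | t ≤ X ω} / α := (one_le_div hα).2 hαt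
    calc t = z + (t - z) * 1 := by ring
      _ ≤ z + (t - z) * (μ.real {ω | t ≤ X ω} / α) := by gcongr
      _ = z + 1 / α * ((t - z) * μ.real {ω | t ≤ X ω}) := by ring
      _ ≤ z + 1 / α * ∫ ω, max (X ω - z) 0 ∂μ := by
        gcongr; exact mul_measureReal_le_integral_max_sub hint t

lemma le_CVaRm (hα : 0 < α) (hαt : α ≤ μ.real {ω | t ≤ X ω})
    (hint : ∀ z, Integrable (fun ω => max (X ω - z) 0) μ) : t ≤ CVaRm μ α X :=
  le_ciInf fun z => le_add_inv_mul_integral_max_sub hα hαt (hint z)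

lemma CVaRm_le_of_ae_le (hα : 0 < α) (hαt : α ≤ μ.real {ω | t ≤ X ω})
    (hint : ∀ z, Integrable (fun ω => max (X ω - z) 0) μ) (hc : ∀ᵐ ω ∂μ, X ω ≤ c) : CVaRm μ α X ≤ c := by
  have hzero : ∫ ω, max (X ω - c) 0 ∂μ = 0 :=
    integral_eq_zero_of_ae <| hc.mono fun ω h => max_eq_right (sub_nonpos.2 h)
  have hbdd : BddBelow (range fun z => z + 1 / α * ∫ ω, max (X ω - z) 0 ∂μ) :=
    ⟨t, forall_mem_range.2 fun z => le_add_inv_mul_integral_max_sub hα hαt (hint z)⟩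
  calc CVaRm μ α X ≤ c + 1 / α * ∫ ω, max (X ω - c) 0 ∂μ := ciInf_le hbdd c
    _ = c := by rw [hzero, mul_zero, add_zero]

end CVaR

/-- CVaR converges to the essential supremum as the confidence level tends to 0. -/
theorem cvar_tendsto_essSup {Ω : Type*} [MeasurableSpace Ω]
    (μ : Measure Ω) [IsProbabilityMeasure μ]
    (X : Ω → ℝ) (hX : Measurable X) (C : ℝ) (hC : ∀ ω, |X ω| ≤ C) :
    Filter.Tendsto (fun α : ℝ => CVaRm μ α X)
      (nhdsWithin 0 (Set.Ioi 0)) (nhds (essSup X μ)) := by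
  have hbdd : IsBoundedUnder (· ≤ ·) (ae μ) X :=
    isBoundedUnder_of_eventually_le (a := C) (ae_of_all _ fun ω => (abs_le.1 (hC ω)).2)
  have hcobdd : IsCoboundedUnder (· ≤ ·) (ae μ) X :=
    isCoboundedUnder_le_of_le (ae μ) fun ω => (abs_le.1 (hC ω)).1
  have hint : ∀ z, Integrable (fun ω => max (X ω - z) 0) μ := fun z =>
    ((Integrable.of_bound hX.aestronglyMeasurable C (ae_of_all _ hC)).sub
      (integrable_const z)).pos_part
  have hsmall : ∀ t < essSup X μ, ∀ᶠ α in 𝓝[>] 0, 0 < α ∧ α ≤ μ.real {ω | t ≤ X ω} :=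
    fun t ht => Ioc_mem_nhdsGT (measureReal_le_pos_of_lt_essSup hcobdd ht)
  refine tendsto_order.2 ⟨fun a ha => ?_, fun b hb => ?_⟩
  · obtain ⟨t, hat, ht⟩ := exists_between ha
    exact (hsmall t ht).mono fun α ⟨hα, hαt⟩ => hat.trans_le (le_CVaRm hα hαt hint)
  · exact (hsmall _ (sub_one_lt _)).mono fun α ⟨hα, hαt⟩ =>
      (CVaRm_le_of_ae_le hα hαt hint (ae_le_essSup hbdd)).trans_lt hb
end

section
/- Characterization of CVaR minimizers (Rockafellar–Uryasev): let (Ω, F, μ) be a probability space, α ∈ (0,1], X : Ω → ℝ a bounded measurable function, and z₀ ∈ ℝ a real number satisfying μ{ω : X(ω) > z₀} ≤ α and μ{ω : X(ω) ≥ z₀} ≥ α. Then z₀ attains the infimum in the definition of CVaR: z₀ + (1/α) ∫ max(X(ω) − z₀, 0) dμ(ω) = inf_{z∈ℝ} { z + (1/α) ∫ max(X(ω) − z, 0) dμ(ω) }. -/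
open MeasureTheory

/-!
Write `I z = ∫ (X - z)⁺ dμ`. Moving `z` to the right of `z₀` lowers `I` by at most
`(z - z₀) μ{X > z₀} ≤ α (z - z₀)`, and moving it to the left raises `I` by at least
`(z₀ - z) μ{X ≥ z₀} ≥ α (z₀ - z)`; in both cases the change of the linear term `z` pays
for the change of `α⁻¹ I z`.
-/

noncomputable def cvarObjective {Ω : Type*} [MeasurableSpace Ω] (μ : Measure Ω) (α : ℝ)
    (X : Ω → ℝ) (z : ℝ) : ℝ :=
  z + (1 / α) * ∫ ω, max (X ω - z) 0 ∂μ

section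

variable {Ω : Type*} [MeasurableSpace Ω] {μ : Measure Ω} [IsFiniteMeasure μ] {X : Ω → ℝ}

theorem MeasureTheory.Integrable.posPart_sub_const (hXi : Integrable X μ) (c : ℝ) :
    Integrable (fun ω => max (X ω - c) 0) μ :=
  (hXi.sub (integrable_const c)).pos_part

theorem integral_posPart_sub_le_add (hXm : Measurable X) (hXi : Integrable X μ) (z₀ z : ℝ) :
    ∫ ω, max (X ω - z₀) 0 ∂μ ≤
      ∫ ω, max (X ω - z) 0 ∂μ + μ.real {ω | z₀ < X ω} * (z - z₀) := by
  have hs : MeasurableSet {ω | z₀ < X ω} := measurableSet_lt measurable_const hXm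
  have hpt : ∀ ω, max (X ω - z₀) 0 ≤
      max (X ω - z) 0 + {ω | z₀ < X ω}.indicator (fun _ => z - z₀) ω := by
    intro ω
    simp only [Set.indicator_apply, Set.mem_ofPred_eq]
    split_ifs with hω
    · rcases le_total (X ω) z with hXz | hXz
      · rw [max_eq_left (by linarith), max_eq_right (by linarith)]; linarith
      · rw [max_eq_left (by linarith), max_eq_left (by linarith)]; linarith
    · rw [max_eq_right (by linarith)]
      simp
  calc ∫ ω, max (X ω - z₀) 0 ∂μ
      ≤ ∫ ω, max (X ω - z) 0 + {ω | z₀ < X ω}.indicator (fun _ => z - z₀) ω ∂μ :=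
        integral_mono (hXi.posPart_sub_const z₀)
          ((hXi.posPart_sub_const z).add ((integrable_const _).indicator hs)) hpt
    _ = _ := by
        rw [integral_add (hXi.posPart_sub_const z)
          ((integrable_const _).indicator hs), integral_indicator_const _ hs, smul_eq_mul]

theorem integral_posPart_sub_add_le (hXm : Measurable X) (hXi : Integrable X μ) (z₀ z : ℝ) :
    ∫ ω, max (X ω - z₀) 0 ∂μ + μ.real {ω | z₀ ≤ X ω} * (z₀ - z) ≤
      ∫ ω, max (X ω - z) 0 ∂μ := by
  have hs : MeasurableSet {ω | z₀ ≤ X ω} := measurableSet_le measurable_const hXm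
  have hpt : ∀ ω, max (X ω - z₀) 0 + {ω | z₀ ≤ X ω}.indicator (fun _ => z₀ - z) ω ≤
      max (X ω - z) 0 := by
    intro ω
    simp only [Set.indicator_apply, Set.mem_ofPred_eq]
    split_ifs with hω
    · rw [max_eq_left (by linarith)]
      linarith [le_max_left (X ω - z) 0]
    · rw [max_eq_right (by linarith)]
      simp
  calc ∫ ω, max (X ω - z₀) 0 ∂μ + μ.real {ω | z₀ ≤ X ω} * (z₀ - z)
      = ∫ ω, max (X ω - z₀) 0 + {ω | z₀ ≤ X ω}.indicator (fun _ => z₀ - z) ω ∂μ := by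
        rw [integral_add (hXi.posPart_sub_const z₀)
          ((integrable_const _).indicator hs), integral_indicator_const _ hs, smul_eq_mul]
    _ ≤ _ :=
        integral_mono ((hXi.posPart_sub_const z₀).add ((integrable_const _).indicator hs))
          (hXi.posPart_sub_const z) hpt

theorem cvarObjective_le_of_isQuantile (hXm : Measurable X) (hXi : Integrable X μ) {α z₀ : ℝ}
    (hα : 0 < α) (hgt : μ.real {ω | z₀ < X ω} ≤ α) (hge : α ≤ μ.real {ω | z₀ ≤ X ω})
    (z : ℝ) : cvarObjective μ α X z₀ ≤ cvarObjective μ α X z := by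
  rw [cvarObjective, cvarObjective, one_div]
  rcases le_total z₀ z with h | h
  · have hI := integral_posPart_sub_le_add hXm hXi z₀ z
    have : α⁻¹ * (∫ ω, max (X ω - z₀) 0 ∂μ - ∫ ω, max (X ω - z) 0 ∂μ) ≤ z - z₀ := by
      rw [inv_mul_le_iff₀ hα]
      linarith [mul_le_mul_of_nonneg_right hgt (sub_nonneg.2 h)]
    linarith [mul_sub α⁻¹ (∫ ω, max (X ω - z₀) 0 ∂μ) (∫ ω, max (X ω - z) 0 ∂μ)]
  · have hI := integral_posPart_sub_add_le hXm hXi z₀ z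
    have : z₀ - z ≤ α⁻¹ * (∫ ω, max (X ω - z) 0 ∂μ - ∫ ω, max (X ω - z₀) 0 ∂μ) := by
      rw [le_inv_mul_iff₀ hα]
      linarith [mul_le_mul_of_nonneg_right hge (sub_nonneg.2 h)]
    linarith [mul_sub α⁻¹ (∫ ω, max (X ω - z) 0 ∂μ) (∫ ω, max (X ω - z₀) 0 ∂μ)]

end

theorem cvar_inf_attained_at_quantile_general {Ω : Type*} [MeasurableSpace Ω]
    (μ : Measure Ω) [IsProbabilityMeasure μ]
    {α : ℝ} (hα0 : 0 < α)
    (X : Ω → ℝ) (hX : Measurable X) (C : ℝ) (hC : ∀ ω, |X ω| ≤ C)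
    (z₀ : ℝ) (h₁ : μ {ω | z₀ < X ω} ≤ ENNReal.ofReal α)
    (h₂ : ENNReal.ofReal α ≤ μ {ω | z₀ ≤ X ω}) :
    z₀ + (1 / α) * ∫ ω, max (X ω - z₀) 0 ∂μ = CVaRm μ α X := by
  have hXi : Integrable X μ :=
    .of_bound hX.aestronglyMeasurable C (ae_of_all _ fun ω => (Real.norm_eq_abs _).trans_le (hC ω))
  have hgt : μ.real {ω | z₀ < X ω} ≤ α := ENNReal.toReal_le_of_le_ofReal hα0.le h₁
  have hge : α ≤ μ.real {ω | z₀ ≤ X ω} :=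
    (ENNReal.ofReal_le_iff_le_toReal (measure_ne_top _ _)).1 h₂
  have hmin := cvarObjective_le_of_isQuantile hX hXi hα0 hgt hge
  exact le_antisymm (le_ciInf hmin) (ciInf_le ⟨_, Set.forall_mem_range.2 hmin⟩ z₀)

/-- Rockafellar–Uryasev: any α-quantile z₀ of X attains the infimum in the
definition of CVaR. -/
theorem cvar_inf_attained_at_quantile {Ω : Type*} [MeasurableSpace Ω]
    (μ : Measure Ω) [IsProbabilityMeasure μ]
    {α : ℝ} (hα0 : 0 < α) (hα1 : α ≤ 1)
    (X : Ω → ℝ) (hX : Measurable X) (C : ℝ) (hC : ∀ ω, |X ω| ≤ C)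
    (z₀ : ℝ) (h₁ : μ {ω | z₀ < X ω} ≤ ENNReal.ofReal α)
    (h₂ : ENNReal.ofReal α ≤ μ {ω | z₀ ≤ X ω}) :
    z₀ + (1 / α) * ∫ ω, max (X ω - z₀) 0 ∂μ = CVaRm μ α X :=
  cvar_inf_attained_at_quantile_general μ hα0 X hX C hC z₀ h₁ h₂
end
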